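/- Let p, q ∈ [1, ∞), α ∈ (−1, q−1), and ℓ = 1 − (1+α)/q. There exists N = N(p, q, α) > 0 such that for every f : ℝ × [0, ∞) → ℝ that is continuously differentiable up to the boundary and satisfies ‖Df‖_{L_{p,q}(ℝ^2_+, μ)} < ∞, one has ‖f(·,0)‖_{b^ℓ_{p,q}(ℝ)} ≤ N (∫_0^∞ (∫_ℝ |Df(x,y)|^p dx)^{q/p} y^α dy)^{1/q}, where Df = (D_x f, D_y f) is the full gradient. -/

import Mathlib

/-!
Join `(x, 0)` to `(x + h, 0)` by going up to height `t ∈ (0, h]`, across, and back down. By the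
fundamental theorem of calculus and Minkowski's integral inequality the two vertical legs have
`L_p`-norm at most `∫₀ʰ G`, where `G s = ‖Df(·, s)‖_{L_p}`, and the horizontal one at most
`h G(t)`; averaging over `t` gives `‖Δ_h f(·, 0)‖_{L_p} ≤ 3 ∫₀ʰ G`. Since
`ℓ q = σ := q - 1 - α > 0`, Hardy's inequality
`∫₀^∞ (∫₀ʳ G)^q r^(-σ-1) dr ≤ C ∫₀^∞ G^q s^(q-1-σ) ds` finishes the proof, as `q - 1 - σ = α`.
-/

open MeasureTheory ENNReal Set Filter Topology

theorem ENNReal.le_rpow_of_le_rpow_mul {p q : ℝ} (hpq : p.HolderConjugate q) {A R : ℝ≥0∞}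
    (hA : A ≠ ⊤) (h : A ≤ A ^ (1 / q) * R) : A ≤ R ^ p := by
  rcases eq_or_ne A 0 with rfl | hA0
  · exact zero_le
  have hq : 0 < 1 / q := one_div_pos.mpr hpq.symm.pos
  have hsplit : A ^ (1 / p) * A ^ (1 / q) = A := by
    rw [← ENNReal.rpow_add_of_nonneg _ _ (one_div_pos.mpr hpq.pos).le hq.le, one_div, one_div,
      hpq.inv_add_inv_eq_one, ENNReal.rpow_one]
  have hroot : A ^ (1 / p) ≤ R := by
    refine (ENNReal.mul_le_mul_iff_left (c := A ^ (1 / q)) ?_ ?_).mp ?_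
    · exact (ENNReal.rpow_pos (pos_iff_ne_zero.mpr hA0) hA).ne'
    · exact ENNReal.rpow_ne_top_of_nonneg hq.le hA
    · rw [hsplit, mul_comm R]; exact h
  rwa [one_div, ENNReal.rpow_inv_le_iff hpq.pos] at hroot

section IteratedLIntegral

variable {X S : Type*} [MeasurableSpace X] [MeasurableSpace S] {μ : Measure X} {ν : Measure S}
  {F : X → S → ℝ≥0∞}

theorem lintegral_le_rpow_lintegral_of_le_rpow_lintegral [SFinite μ] [SFinite ν] {p q : ℝ}
    (hpq : p.HolderConjugate q) (hF : Measurable (Function.uncurry F)) {u : X → ℝ≥0∞}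
    (hu : Measurable u) (hu_fin : ∫⁻ x, u x ∂μ ≠ ⊤) (hle : ∀ x, u x ≤ (∫⁻ s, F x s ∂ν) ^ p) :
    ∫⁻ x, u x ∂μ ≤ (∫⁻ s, (∫⁻ x, F x s ^ p ∂μ) ^ (1 / p) ∂ν) ^ p := by
  refine ENNReal.le_rpow_of_le_rpow_mul hpq hu_fin ?_
  have hFx : ∀ x, Measurable (F x) := fun x => hF.comp measurable_prodMk_left
  have hFs : ∀ s, Measurable fun x => F x s := fun s => hF.comp measurable_prodMk_right
  have hq : 0 ≤ 1 / q := (one_div_pos.mpr hpq.symm.pos).le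
  calc ∫⁻ x, u x ∂μ = ∫⁻ x, u x ^ (1 / q) * u x ^ (1 / p) ∂μ := by
        refine lintegral_congr fun x => ?_
        rw [← ENNReal.rpow_add_of_nonneg _ _ hq (one_div_pos.mpr hpq.pos).le, one_div, one_div,
          add_comm, hpq.inv_add_inv_eq_one, ENNReal.rpow_one]
    _ ≤ ∫⁻ x, ∫⁻ s, u x ^ (1 / q) * F x s ∂ν ∂μ := by
        refine lintegral_mono fun x => ?_
        rw [lintegral_const_mul _ (hFx x)]
        gcongr
        rw [one_div, ENNReal.rpow_inv_le_iff hpq.pos]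
        exact hle x
    _ = ∫⁻ s, ∫⁻ x, u x ^ (1 / q) * F x s ∂μ ∂ν :=
        lintegral_lintegral_swap (((hu.pow_const _).comp measurable_fst).mul hF).aemeasurable
    _ ≤ ∫⁻ s, (∫⁻ x, u x ∂μ) ^ (1 / q) * (∫⁻ x, F x s ^ p ∂μ) ^ (1 / p) ∂ν := by
        refine lintegral_mono fun s => ?_
        have := ENNReal.lintegral_mul_le_Lp_mul_Lq μ hpq.symm (hu.pow_const (1 / q)).aemeasurable
          (hFs s).aemeasurable
        simp_rw [← ENNReal.rpow_mul, one_div_mul_cancel hpq.symm.ne_zero, ENNReal.rpow_one] at this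
        exact this
    _ = (∫⁻ x, u x ∂μ) ^ (1 / q) * ∫⁻ s, (∫⁻ x, F x s ^ p ∂μ) ^ (1 / p) ∂ν :=
        lintegral_const_mul' _ _ (ENNReal.rpow_ne_top_of_nonneg hq hu_fin)

theorem lintegral_lintegral_rpow_le [SigmaFinite μ] [SFinite ν] {p : ℝ} (hp : 1 ≤ p)
    (hF : Measurable (Function.uncurry F)) :
    (∫⁻ x, (∫⁻ s, F x s ∂ν) ^ p ∂μ) ^ (1 / p) ≤ ∫⁻ s, (∫⁻ x, F x s ^ p ∂μ) ^ (1 / p) ∂ν := by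
  rcases hp.eq_or_lt with rfl | hp1
  · simpa using (lintegral_lintegral_swap hF.aemeasurable).le
  have hpq := Real.HolderConjugate.conjExponent hp1
  refine (ENNReal.rpow_le_rpow_iff hpq.pos).mp ?_
  rw [← ENNReal.rpow_mul, one_div_mul_cancel hpq.ne_zero, ENNReal.rpow_one]
  have hΦ : Measurable fun x => (∫⁻ s, F x s ∂ν) ^ p := hF.lintegral_prod_right.pow_const p
  -- truncate to sets of finite measure and to bounded values, where the duality argument applies
  refine lintegral_le_of_forall_fin_meas_le _ fun E hE hμE => ?_
  have hsup : ∀ x, (∫⁻ s, F x s ∂ν) ^ p = ⨆ n : ℕ, min ((∫⁻ s, F x s ∂ν) ^ p) n := fun x => by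
    rw [← inf_iSup_eq, ENNReal.iSup_natCast, inf_top_eq]
  rw [lintegral_congr hsup, lintegral_iSup (fun n => hΦ.min measurable_const)
    fun m n hmn x => min_le_min le_rfl (Nat.cast_le.mpr hmn)]
  refine iSup_le fun n => ?_
  calc ∫⁻ x in E, min ((∫⁻ s, F x s ∂ν) ^ p) n ∂μ
      ≤ (∫⁻ s, (∫⁻ x in E, F x s ^ p ∂μ) ^ (1 / p) ∂ν) ^ p := by
        refine lintegral_le_rpow_lintegral_of_le_rpow_lintegral hpq hF
          (hΦ.min measurable_const) ?_ fun x => min_le_left _ _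
        refine ne_top_of_le_ne_top ?_ (lintegral_mono fun x => min_le_right _ (n : ℝ≥0∞))
        simpa [setLIntegral_const] using ENNReal.mul_ne_top (ENNReal.natCast_ne_top n) hμE
    _ ≤ (∫⁻ s, (∫⁻ x, F x s ^ p ∂μ) ^ (1 / p) ∂ν) ^ p := by
        gcongr
        exact Measure.restrict_le_self

theorem eLpNorm_le_lintegral_eLpNorm_of_enorm_le [SigmaFinite μ] [SFinite ν] {ε ε' : Type*}
    [ENorm ε] [ENorm ε'] {p : ℝ} (hp : 1 ≤ p) {u : X → ε} {v : X → S → ε'}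
    (hv : Measurable (Function.uncurry fun x s => ‖v x s‖ₑ))
    (hu : ∀ x, ‖u x‖ₑ ≤ ∫⁻ s, ‖v x s‖ₑ ∂ν) :
    eLpNorm u (ENNReal.ofReal p) μ ≤ ∫⁻ s, eLpNorm (fun x => v x s) (ENNReal.ofReal p) μ ∂ν := by
  have hp0 : 0 < p := zero_lt_one.trans_le hp
  simp only [eLpNorm_eq_lintegral_rpow_enorm_toReal (ENNReal.ofReal_pos.mpr hp0).ne'
    ENNReal.ofReal_ne_top, ENNReal.toReal_ofReal hp0.le]
  calc (∫⁻ x, ‖u x‖ₑ ^ p ∂μ) ^ (1 / p) ≤ (∫⁻ x, (∫⁻ s, ‖v x s‖ₑ ∂ν) ^ p ∂μ) ^ (1 / p) := by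
        gcongr with x
        exact hu x
    _ ≤ _ := lintegral_lintegral_rpow_le hp hv

theorem measurable_eLpNorm_slice [SFinite μ] {E : Type*} [NormedAddCommGroup E] {p : ℝ}
    (hp : 0 < p) {g : X × S → E} (hg : Measurable fun z => ‖g z‖ₑ) :
    Measurable fun s => eLpNorm (fun x => g (x, s)) (ENNReal.ofReal p) μ := by
  simp only [eLpNorm_eq_lintegral_rpow_enorm_toReal (ENNReal.ofReal_pos.mpr hp).ne'
    ENNReal.ofReal_ne_top]
  exact ((hg.pow_const _).lintegral_prod_left').pow_const _

theorem eLpNorm_rpow_eq {E : Type*} [NormedAddCommGroup E] {p : ℝ} (hp : 0 < p) (q : ℝ)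
    (g : X → E) :
    eLpNorm g (ENNReal.ofReal p) μ ^ q = (∫⁻ x, ENNReal.ofReal (‖g x‖ ^ p) ∂μ) ^ (q / p) := by
  rw [eLpNorm_eq_lintegral_rpow_enorm_toReal (ENNReal.ofReal_pos.mpr hp).ne'
    ENNReal.ofReal_ne_top, ENNReal.toReal_ofReal hp.le, ← ENNReal.rpow_mul, one_div_mul_eq_div]
  simp_rw [← ofReal_norm, ENNReal.ofReal_rpow_of_nonneg (norm_nonneg _) hp.le]

end IteratedLIntegral

theorem eLpNorm_comp_add_right {E : Type*} [NormedAddCommGroup E] (g : ℝ → E) (a : ℝ) (p : ℝ≥0∞) :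
    eLpNorm (fun x => g (x + a)) p volume = eLpNorm g p volume := by
  have h := (measurableEmbedding_addRight a).eLpNorm_map_measure (g := g) (p := p) (μ := volume)
  rw [map_add_right_eq_self] at h
  exact h.symm

theorem lintegral_eq_two_mul_setLIntegral_Ioi_of_even {W : ℝ → ℝ≥0∞} (hW : ∀ h, W (-h) = W h) :
    ∫⁻ h, W h = 2 * ∫⁻ h in Ioi 0, W h := by
  rw [← lintegral_add_compl W measurableSet_Ioi, compl_Ioi, two_mul, add_comm]
  congr 1
  rw [← lintegral_indicator measurableSet_Iic, ← lintegral_neg_eq_self,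
    Measure.restrict_congr_set Ioi_ae_eq_Ici, ← lintegral_indicator measurableSet_Ici]
  congr 1 with h
  by_cases hh : 0 ≤ h <;> simp [indicator, hh, hW]

theorem lintegral_rpow_Ioc {c a : ℝ} (hc : -1 < c) (ha : 0 ≤ a) :
    ∫⁻ s in Ioc 0 a, ENNReal.ofReal (s ^ c) = ENNReal.ofReal (a ^ (c + 1) / (c + 1)) := by
  have hint : IntegrableOn (fun s : ℝ => s ^ c) (Ioc 0 a) :=
    (intervalIntegrable_iff_integrableOn_Ioc_of_le ha).mp
      (intervalIntegral.intervalIntegrable_rpow' hc)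
  rw [← ofReal_integral_eq_lintegral_ofReal hint
      ((ae_restrict_mem measurableSet_Ioc).mono fun s hs => Real.rpow_nonneg hs.1.le c),
    ← intervalIntegral.integral_of_le ha, integral_rpow (Or.inl hc),
    Real.zero_rpow (by linarith), sub_zero]

theorem lintegral_rpow_Ioi {c a : ℝ} (hc : c < -1) (ha : 0 < a) :
    ∫⁻ s in Ioi a, ENNReal.ofReal (s ^ c) = ENNReal.ofReal (-a ^ (c + 1) / (c + 1)) := by
  rw [← ofReal_integral_eq_lintegral_ofReal (integrableOn_Ioi_rpow_of_lt hc ha)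
      ((ae_restrict_mem measurableSet_Ioi).mono fun s hs => Real.rpow_nonneg (ha.trans hs).le c),
    integral_Ioi_rpow_of_lt hc ha]

theorem ENNReal.ofReal_rpow_mul_ofReal_rpow {s : ℝ} (hs : 0 < s) (a b : ℝ) :
    ENNReal.ofReal (s ^ a) * ENNReal.ofReal (s ^ b) = ENNReal.ofReal (s ^ (a + b)) := by
  rw [← ENNReal.ofReal_mul (Real.rpow_nonneg hs.le a), Real.rpow_add hs]

theorem ENNReal.rpow_lintegral_mul_le {X : Type*} [MeasurableSpace X] {μ : Measure X} {q : ℝ}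
    (hq : 1 ≤ q) {f g : X → ℝ≥0∞} (hf : Measurable f) (hg : Measurable g) :
    (∫⁻ x, f x * g x ∂μ) ^ q ≤ (∫⁻ x, f x ^ q * g x ∂μ) * (∫⁻ x, g x ∂μ) ^ (q - 1) := by
  rcases hq.eq_or_lt with rfl | hq1
  · simp
  have hqq := Real.HolderConjugate.conjExponent hq1
  set q' := q.conjExponent
  have h1 : 0 ≤ 1 / q := (one_div_pos.mpr hqq.pos).le
  have h2 : 0 ≤ 1 / q' := (one_div_pos.mpr hqq.symm.pos).le
  have hsplit : ∀ x, f x * g x = f x * g x ^ (1 / q) * g x ^ (1 / q') := fun x => by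
    rw [mul_assoc, ← ENNReal.rpow_add_of_nonneg _ _ h1 h2, one_div, one_div,
      hqq.inv_add_inv_eq_one, ENNReal.rpow_one]
  have hHolder := ENNReal.lintegral_mul_le_Lp_mul_Lq μ hqq
    (hf.mul (hg.pow_const (1 / q))).aemeasurable (hg.pow_const (1 / q')).aemeasurable
  simp only [Pi.mul_apply, ← hsplit] at hHolder
  calc (∫⁻ x, f x * g x ∂μ) ^ q
      ≤ ((∫⁻ x, (f x * g x ^ (1 / q)) ^ q ∂μ) ^ (1 / q)
          * (∫⁻ x, (g x ^ (1 / q')) ^ q' ∂μ) ^ (1 / q')) ^ q :=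
        ENNReal.rpow_le_rpow hHolder hqq.nonneg
    _ = (∫⁻ x, f x ^ q * g x ∂μ) * (∫⁻ x, g x ∂μ) ^ (q - 1) := by
        simp_rw [ENNReal.mul_rpow_of_nonneg _ _ hqq.nonneg, ← ENNReal.rpow_mul,
          one_div_mul_cancel hqq.ne_zero, one_div_mul_cancel hqq.symm.ne_zero, ENNReal.rpow_one]
        rw [one_div_mul_eq_div, hqq.div_conj_eq_sub_one]

theorem rpow_setLIntegral_Ioc_le {q κ r : ℝ} (hq : 1 ≤ q) (hκ : 0 < κ) (hr : 0 < r)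
    {G : ℝ → ℝ≥0∞} (hG : Measurable G) :
    (∫⁻ s in Ioc 0 r, G s) ^ q
      ≤ (∫⁻ s in Ioc 0 r, G s ^ q * ENNReal.ofReal (s ^ ((q - 1) * (1 - κ))))
        * ENNReal.ofReal (κ ^ (1 - q) * r ^ (κ * (q - 1))) := by
  have key := ENNReal.rpow_lintegral_mul_le (μ := volume.restrict (Ioc 0 r)) hq
    (f := fun s => G s * ENNReal.ofReal (s ^ (1 - κ))) (g := fun s => ENNReal.ofReal (s ^ (κ - 1)))
    (by fun_prop) (by fun_prop)
  have hfg : ∫⁻ s in Ioc 0 r, G s * ENNReal.ofReal (s ^ (1 - κ)) * ENNReal.ofReal (s ^ (κ - 1))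
      = ∫⁻ s in Ioc 0 r, G s := by
    refine setLIntegral_congr_fun measurableSet_Ioc fun s hs => ?_
    rw [mul_assoc, ENNReal.ofReal_rpow_mul_ofReal_rpow hs.1, sub_add_sub_cancel', sub_self,
      Real.rpow_zero, ENNReal.ofReal_one, mul_one]
  have hfqg : ∫⁻ s in Ioc 0 r, (G s * ENNReal.ofReal (s ^ (1 - κ))) ^ q
      * ENNReal.ofReal (s ^ (κ - 1))
      = ∫⁻ s in Ioc 0 r, G s ^ q * ENNReal.ofReal (s ^ ((q - 1) * (1 - κ))) := by
    refine setLIntegral_congr_fun measurableSet_Ioc fun s hs => ?_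
    rw [ENNReal.mul_rpow_of_nonneg _ _ (by linarith), ENNReal.ofReal_rpow_of_nonneg
      (Real.rpow_nonneg hs.1.le _) (by linarith), ← Real.rpow_mul hs.1.le, mul_assoc,
      ENNReal.ofReal_rpow_mul_ofReal_rpow hs.1]
    congr 3
    ring
  have hg : (∫⁻ s in Ioc 0 r, ENNReal.ofReal (s ^ (κ - 1))) ^ (q - 1)
      = ENNReal.ofReal (κ ^ (1 - q) * r ^ (κ * (q - 1))) := by
    rw [lintegral_rpow_Ioc (by linarith) hr.le, sub_add_cancel,
      ENNReal.ofReal_rpow_of_nonneg (by positivity) (by linarith),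
      Real.div_rpow (by positivity) hκ.le, ← Real.rpow_mul hr.le, div_eq_mul_inv,
      ← Real.rpow_neg hκ.le, neg_sub, mul_comm]
  rwa [hfg, hfqg, hg] at key

theorem lintegral_Ioi_lintegral_Ioc_mul {H W : ℝ → ℝ≥0∞} (hH : Measurable H) (hW : Measurable W) :
    ∫⁻ r in Ioi 0, (∫⁻ s in Ioc 0 r, H s) * W r = ∫⁻ s in Ioi 0, H s * ∫⁻ r in Ici s, W r := by
  set K : ℝ × ℝ → ℝ≥0∞ := {z | z.2 ≤ z.1}.indicator fun z => H z.2 * W z.1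
  have hK : Measurable K :=
    ((hH.comp measurable_snd).mul (hW.comp measurable_fst)).indicator
      (measurableSet_le measurable_snd measurable_fst)
  calc ∫⁻ r in Ioi 0, (∫⁻ s in Ioc 0 r, H s) * W r
      = ∫⁻ r in Ioi 0, ∫⁻ s in Ioi 0, K (r, s) := by
        refine lintegral_congr fun r => ?_
        rw [← lintegral_mul_const _ hH, ← Iic_inter_Ioi,
          ← Measure.restrict_restrict measurableSet_Iic, ← lintegral_indicator measurableSet_Iic]
        congr 1 with s
    _ = ∫⁻ s in Ioi 0, ∫⁻ r in Ioi 0, K (r, s) :=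
        lintegral_lintegral_swap hK.aemeasurable
    _ = ∫⁻ s in Ioi 0, H s * ∫⁻ r in Ici s, W r := by
        refine setLIntegral_congr_fun measurableSet_Ioi fun s hs => ?_
        rw [← lintegral_const_mul _ hW, ← inter_eq_left.mpr (Ici_subset_Ioi.mpr hs),
          ← Measure.restrict_restrict measurableSet_Ici, ← lintegral_indicator measurableSet_Ici]
        congr 1 with r

theorem lintegral_Ioi_setLIntegral_Ioc_mul_rpow {δ : ℝ} (hδ : 0 < δ) {H : ℝ → ℝ≥0∞}
    (hH : Measurable H) :
    ∫⁻ r in Ioi 0, (∫⁻ s in Ioc 0 r, H s) * ENNReal.ofReal (r ^ (-δ - 1))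
      = ENNReal.ofReal δ⁻¹ * ∫⁻ s in Ioi 0, H s * ENNReal.ofReal (s ^ (-δ)) := by
  rw [lintegral_Ioi_lintegral_Ioc_mul hH (by fun_prop),
    ← lintegral_const_mul' _ _ ENNReal.ofReal_ne_top]
  refine setLIntegral_congr_fun measurableSet_Ioi fun s hs => ?_
  rw [← Measure.restrict_congr_set Ioi_ae_eq_Ici, lintegral_rpow_Ioi (by linarith) hs,
    sub_add_cancel, neg_div_neg_eq, div_eq_inv_mul, ENNReal.ofReal_mul (by positivity),
    mul_left_comm]

theorem hardy_inequality {q σ : ℝ} (hq : 1 ≤ q) (hσ : 0 < σ) :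
    ∃ C : ℝ, 0 < C ∧ ∀ G : ℝ → ℝ≥0∞, Measurable G →
      ∫⁻ r in Ioi 0, (∫⁻ s in Ioc 0 r, G s) ^ q * ENNReal.ofReal (r ^ (-σ - 1))
        ≤ ENNReal.ofReal C * ∫⁻ s in Ioi 0, G s ^ q * ENNReal.ofReal (s ^ (q - 1 - σ)) := by
  -- Jensen on `(0, r]` against the weight `s ^ (κ - 1)`, then Tonelli; any `κ > 0` with
  -- `κ (q - 1) < σ` keeps both the weight near `0` and the tail in `r` integrable
  set κ := σ / (2 * q)
  set δ := σ - κ * (q - 1)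
  have hκ : 0 < κ := by positivity
  have hδ : 0 < δ := by
    have : κ * (q - 1) < σ := by
      simp only [κ]; rw [div_mul_eq_mul_div, div_lt_iff₀ (by positivity)]; nlinarith
    linarith
  refine ⟨κ ^ (1 - q) / δ, by positivity, fun G hG => ?_⟩
  set H : ℝ → ℝ≥0∞ := fun s => G s ^ q * ENNReal.ofReal (s ^ ((q - 1) * (1 - κ)))
  have hH : Measurable H := (hG.pow_const q).mul (by fun_prop)
  calc ∫⁻ r in Ioi 0, (∫⁻ s in Ioc 0 r, G s) ^ q * ENNReal.ofReal (r ^ (-σ - 1))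
      ≤ ∫⁻ r in Ioi 0, (∫⁻ s in Ioc 0 r, H s) * ENNReal.ofReal (κ ^ (1 - q) * r ^ (κ * (q - 1)))
          * ENNReal.ofReal (r ^ (-σ - 1)) :=
        setLIntegral_mono' measurableSet_Ioi fun r hr =>
          mul_le_mul_left (rpow_setLIntegral_Ioc_le hq hκ hr hG) _
    _ = ENNReal.ofReal (κ ^ (1 - q))
          * ∫⁻ r in Ioi 0, (∫⁻ s in Ioc 0 r, H s) * ENNReal.ofReal (r ^ (-δ - 1)) := by
        rw [← lintegral_const_mul' _ _ ENNReal.ofReal_ne_top]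
        refine setLIntegral_congr_fun measurableSet_Ioi fun r hr => ?_
        rw [ENNReal.ofReal_mul (by positivity), mul_left_comm, mul_assoc, mul_assoc,
          ENNReal.ofReal_rpow_mul_ofReal_rpow hr, show κ * (q - 1) + (-σ - 1) = -δ - 1 by ring]
    _ = ENNReal.ofReal (κ ^ (1 - q) / δ)
          * ∫⁻ s in Ioi 0, G s ^ q * ENNReal.ofReal (s ^ (q - 1 - σ)) := by
        rw [lintegral_Ioi_setLIntegral_Ioc_mul_rpow hδ hH,
          ← mul_assoc, ← ENNReal.ofReal_mul (by positivity), ← div_eq_mul_inv]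
        congr 1
        refine setLIntegral_congr_fun measurableSet_Ioi fun s hs => ?_
        rw [mul_assoc, ENNReal.ofReal_rpow_mul_ofReal_rpow hs,
          show (q - 1) * (1 - κ) + -δ = q - 1 - σ by ring]

theorem enorm_sub_le_lintegral_fderiv_segment {E F : Type*} [NormedAddCommGroup E]
    [NormedSpace ℝ E] [NormedAddCommGroup F] [NormedSpace ℝ F] {f : E → F} {U : Set E}
    (hf : ContDiffOn ℝ 1 f U) {z v : E} (hv : ‖v‖ₑ ≤ 1) {T : ℝ} (hT : 0 ≤ T)
    (hseg : ∀ s ∈ Icc 0 T, z + s • v ∈ U) (hint : ∀ s ∈ Ioo 0 T, U ∈ 𝓝 (z + s • v)) :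
    ‖f (z + T • v) - f z‖ₑ ≤ ∫⁻ s in Ioc 0 T, ‖fderiv ℝ f (z + s • v)‖ₑ := by
  have hline : ∀ s, HasDerivAt (fun s : ℝ => z + s • v) v s := fun s => by
    simpa using ((hasDerivAt_id s).smul_const v).const_add z
  have hφ : ContDiffOn ℝ 1 (fun s : ℝ => f (z + s • v)) (Icc 0 T) :=
    hf.comp (contDiff_const.add (contDiff_id.smul contDiff_const)).contDiffOn hseg
  calc ‖f (z + T • v) - f z‖ₑ = ‖f (z + T • v) - f (z + (0 : ℝ) • v)‖ₑ := by simp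
    _ ≤ ∫⁻ s in Icc 0 T, ‖deriv (fun s : ℝ => f (z + s • v)) s‖ₑ :=
        enorm_sub_le_lintegral_deriv_of_contDiffOn_Icc hφ hT
    _ = ∫⁻ s in Ioo 0 T, ‖deriv (fun s : ℝ => f (z + s • v)) s‖ₑ := by
        rw [restrict_Ioo_eq_restrict_Icc]
    _ ≤ ∫⁻ s in Ioo 0 T, ‖fderiv ℝ f (z + s • v)‖ₑ := by
        refine setLIntegral_mono' measurableSet_Ioo fun s hs => ?_
        have hfs := ((hf.differentiableOn one_ne_zero).differentiableAt (hint s hs)).hasFDerivAt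
        have hd : HasDerivAt (fun s : ℝ => f (z + s • v)) (fderiv ℝ f (z + s • v) v) s :=
          hfs.comp_hasDerivAt s (hline s)
        rw [hd.deriv]
        exact (ContinuousLinearMap.le_opENorm _ _).trans (mul_le_of_le_one_right' hv)
    _ ≤ ∫⁻ s in Ioc 0 T, ‖fderiv ℝ f (z + s • v)‖ₑ := lintegral_mono_set Ioo_subset_Ioc_self

section HalfPlane

variable {f : ℝ × ℝ → ℝ} {p : ℝ}

theorem eLpNorm_sub_boundary_le (hf : ContDiffOn ℝ 1 f (univ ×ˢ Ici 0)) (hp : 1 ≤ p) {t : ℝ}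
    (ht : 0 ≤ t) :
    eLpNorm (fun x => f (x, t) - f (x, 0)) (ENNReal.ofReal p) volume
      ≤ ∫⁻ s in Ioc 0 t, eLpNorm (fun x => fderiv ℝ f (x, s)) (ENNReal.ofReal p) volume := by
  refine eLpNorm_le_lintegral_eLpNorm_of_enorm_le hp
    ((measurable_fderiv ℝ f).enorm) fun x => ?_
  simpa using enorm_sub_le_lintegral_fderiv_segment hf (z := (x, 0)) (v := (0, 1))
    (by simp [← ofReal_norm, Prod.norm_def]) ht (fun s hs => by simpa using hs.1) fun s hs => by
      simpa using prod_mem_nhds univ_mem (Ici_mem_nhds hs.1)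

theorem eLpNorm_sub_horizontal_le (hf : ContDiffOn ℝ 1 f (univ ×ˢ Ici 0)) (hp : 1 ≤ p) {t h : ℝ}
    (ht : 0 < t) (hh : 0 ≤ h) :
    eLpNorm (fun x => f (x + h, t) - f (x, t)) (ENNReal.ofReal p) volume
      ≤ ENNReal.ofReal h * eLpNorm (fun x => fderiv ℝ f (x, t)) (ENNReal.ofReal p) volume := by
  calc eLpNorm (fun x => f (x + h, t) - f (x, t)) (ENNReal.ofReal p) volume
      ≤ ∫⁻ s in Ioc 0 h, eLpNorm (fun x => fderiv ℝ f (x + s, t)) (ENNReal.ofReal p) volume := by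
        refine eLpNorm_le_lintegral_eLpNorm_of_enorm_le hp
          ((measurable_fderiv ℝ f).enorm.comp (by fun_prop)) fun x => ?_
        simpa using enorm_sub_le_lintegral_fderiv_segment hf (z := (x, t)) (v := (1, 0))
          (by simp [← ofReal_norm, Prod.norm_def])
          hh (fun s _ => by simpa using ht.le) fun s _ => by
            simpa using prod_mem_nhds univ_mem (Ici_mem_nhds ht)
    _ = ENNReal.ofReal h * eLpNorm (fun x => fderiv ℝ f (x, t)) (ENNReal.ofReal p) volume := by
        simp_rw [eLpNorm_comp_add_right (fun x => fderiv ℝ f (x, t))]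
        rw [setLIntegral_const, Real.volume_Ioc, sub_zero, mul_comm]

theorem eLpNorm_boundary_sub_le_of_mem_Ioc (hf : ContDiffOn ℝ 1 f (univ ×ˢ Ici 0)) (hp : 1 ≤ p)
    {h t : ℝ} (ht : t ∈ Ioc 0 h) :
    eLpNorm (fun x => f (x + h, 0) - f (x, 0)) (ENNReal.ofReal p) volume
      ≤ ENNReal.ofReal h * eLpNorm (fun x => fderiv ℝ f (x, t)) (ENNReal.ofReal p) volume
        + 2 * ∫⁻ s in Ioc 0 h, eLpNorm (fun x => fderiv ℝ f (x, s)) (ENNReal.ofReal p) volume := by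
  have hp' : 1 ≤ ENNReal.ofReal p := by simpa using ENNReal.ofReal_le_ofReal hp
  have hcont : ∀ t, 0 ≤ t → Continuous fun x => f (x, t) := fun t ht =>
    continuousOn_univ.mp <| hf.continuousOn.comp (by fun_prop) fun x _ => ⟨trivial, ht⟩
  set V := fun x => f (x, t) - f (x, 0)
  have hV := (eLpNorm_sub_boundary_le hf hp ht.1.le).trans
    (lintegral_mono_set (Ioc_subset_Ioc_right ht.2))
  have hVc : Continuous V := (hcont t ht.1.le).sub (hcont 0 le_rfl)
  have hHc : Continuous fun x => f (x + h, t) - f (x, t) :=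
    ((hcont t ht.1.le).comp (continuous_add_const h)).sub (hcont t ht.1.le)
  have hVh : Continuous fun x => V (x + h) := hVc.comp (continuous_add_const h)
  rw [show (fun x => f (x + h, 0) - f (x, 0))
      = (fun x => (f (x + h, t) - f (x, t)) - V (x + h)) + V by
        ext x; simp only [V, Pi.add_apply]; ring,
    two_mul, ← add_assoc]
  refine (eLpNorm_add_le (hHc.sub hVh).aestronglyMeasurable hVc.aestronglyMeasurable hp').trans
    (add_le_add ?_ hV)
  refine (eLpNorm_sub_le hHc.aestronglyMeasurable hVh.aestronglyMeasurable hp').trans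
    (add_le_add (eLpNorm_sub_horizontal_le hf hp ht.1 (ht.1.trans_le ht.2).le) ?_)
  exact (eLpNorm_comp_add_right V h _).trans_le hV

theorem eLpNorm_boundary_sub_le (hf : ContDiffOn ℝ 1 f (univ ×ˢ Ici 0)) (hp : 1 ≤ p) {h : ℝ}
    (hh : 0 < h) :
    eLpNorm (fun x => f (x + h, 0) - f (x, 0)) (ENNReal.ofReal p) volume
      ≤ 3 * ∫⁻ s in Ioc 0 h, eLpNorm (fun x => fderiv ℝ f (x, s)) (ENNReal.ofReal p) volume := by
  set G := fun s => eLpNorm (fun x => fderiv ℝ f (x, s)) (ENNReal.ofReal p) volume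
  set J := ∫⁻ s in Ioc 0 h, G s
  refine (ENNReal.mul_le_mul_iff_right (ENNReal.ofReal_pos.mpr hh).ne' ENNReal.ofReal_ne_top).mp ?_
  calc ENNReal.ofReal h * eLpNorm (fun x => f (x + h, 0) - f (x, 0)) (ENNReal.ofReal p) volume
      = ∫⁻ _ in Ioc 0 h, eLpNorm (fun x => f (x + h, 0) - f (x, 0)) (ENNReal.ofReal p) volume := by
        rw [setLIntegral_const, Real.volume_Ioc, sub_zero, mul_comm]
    _ ≤ ∫⁻ t in Ioc 0 h, (ENNReal.ofReal h * G t + 2 * J) :=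
        setLIntegral_mono' measurableSet_Ioc fun t ht =>
          eLpNorm_boundary_sub_le_of_mem_Ioc hf hp ht
    _ = ENNReal.ofReal h * (3 * J) := by
        rw [lintegral_add_right _ measurable_const, lintegral_const_mul' _ _ ENNReal.ofReal_ne_top,
          setLIntegral_const, Real.volume_Ioc, sub_zero]
        ring

theorem lintegral_eLpNorm_boundary_sub_le (hf : ContDiffOn ℝ 1 f (univ ×ˢ Ici 0)) (hp : 1 ≤ p)
    {q : ℝ} (hq : 0 ≤ q) (σ : ℝ) :
    ∫⁻ h, eLpNorm (fun x => f (x + h, 0) - f (x, 0)) (ENNReal.ofReal p) volume ^ q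
        * ENNReal.ofReal (|h| ^ (-σ - 1))
      ≤ 2 * 3 ^ q * ∫⁻ h in Ioi 0, (∫⁻ s in Ioc 0 h,
          eLpNorm (fun x => fderiv ℝ f (x, s)) (ENNReal.ofReal p) volume) ^ q
          * ENNReal.ofReal (h ^ (-σ - 1)) := by
  have heven : ∀ h, eLpNorm (fun x => f (x + -h, 0) - f (x, 0)) (ENNReal.ofReal p) volume
      = eLpNorm (fun x => f (x + h, 0) - f (x, 0)) (ENNReal.ofReal p) volume := fun h => by
    rw [← eLpNorm_comp_add_right _ h, ← eLpNorm_neg (f := fun x => f (x + h, 0) - f (x, 0))]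
    congr 1 with x
    simp
  rw [lintegral_eq_two_mul_setLIntegral_Ioi_of_even fun h => by rw [heven, abs_neg], mul_assoc,
    ← lintegral_const_mul' _ _ (ENNReal.rpow_ne_top_of_nonneg hq ENNReal.ofNat_ne_top)]
  gcongr 2 * ?_
  refine setLIntegral_mono' measurableSet_Ioi fun h hh => ?_
  rw [abs_of_pos hh, ← mul_assoc, ← ENNReal.mul_rpow_of_nonneg _ _ hq]
  gcongr
  exact eLpNorm_boundary_sub_le hf hp hh

end HalfPlane

theorem trace_besov_dim_one_general (p q α : ℝ) (hp : 1 ≤ p) (hq : 1 ≤ q)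
    (hα2 : α < q - 1) (ℓ : ℝ) (hℓ : ℓ = 1 - (1 + α) / q) :
    ∃ N : ℝ, 0 < N ∧ ∀ f : ℝ × ℝ → ℝ,
      ContDiffOn ℝ 1 f (Set.univ ×ˢ Set.Ici 0) →
      (∫⁻ y in Set.Ioi (0 : ℝ),
          (∫⁻ x, ENNReal.ofReal (‖fderiv ℝ f (x, y)‖ ^ p)) ^ (q / p) *
            ENNReal.ofReal (y ^ α)) ≠ ⊤ →
      (∫⁻ h : ℝ,
          eLpNorm (fun x => f (x + h, 0) - f (x, 0)) (ENNReal.ofReal p) volume ^ q *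
            ENNReal.ofReal (|h| ^ (-(ℓ * q) - 1))) ^ (1 / q)
        ≤ ENNReal.ofReal N *
          (∫⁻ y in Set.Ioi (0 : ℝ),
            (∫⁻ x, ENNReal.ofReal (‖fderiv ℝ f (x, y)‖ ^ p)) ^ (q / p) *
              ENNReal.ofReal (y ^ α)) ^ (1 / q) := by
  have hq0 : 0 < q := zero_lt_one.trans_le hq
  set σ := q - 1 - α
  obtain ⟨C, hC, hardy⟩ := hardy_inequality hq (σ := σ) (by linarith)
  refine ⟨(2 * 3 ^ q * C) ^ (1 / q), by positivity, fun f hf _ => ?_⟩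
  have hG := measurable_eLpNorm_slice (μ := volume) (zero_lt_one.trans_le hp)
    (measurable_fderiv ℝ f).enorm
  have hℓq : -(ℓ * q) - 1 = -σ - 1 := by rw [hℓ]; field_simp; ring
  have hα : α = q - 1 - σ := by ring
  simp_rw [hℓq, ← eLpNorm_rpow_eq (zero_lt_one.trans_le hp), hα]
  rw [← ENNReal.ofReal_rpow_of_pos (by positivity),
    ← ENNReal.mul_rpow_of_nonneg _ _ (by positivity)]
  gcongr
  calc _ ≤ _ := lintegral_eLpNorm_boundary_sub_le hf hp hq0.le σ
    _ ≤ 2 * 3 ^ q * (ENNReal.ofReal C * _) := by gcongr; exact hardy _ hG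
    _ = _ := by
        rw [ENNReal.ofReal_mul (by positivity), ENNReal.ofReal_mul (by positivity),
          ← ENNReal.ofReal_rpow_of_pos (by norm_num)]
        norm_num [mul_assoc]

/-- One-dimensional trace estimate: for `f : ℝ × [0,∞) → ℝ` continuously differentiable
up to the boundary with gradient in `L_{p,q}(ℝ²₊, y^α dx dy)`, the Besov seminorm
`‖f(·,0)‖_{b^ℓ_{p,q}(ℝ)}`, `ℓ = 1 - (1+α)/q`, is controlled by the weighted mixed norm
of the full gradient `Df`.  The constant `N` depends only on `p`, `q`, `α`. -/
theorem trace_besov_dim_one (p q α : ℝ) (hp : 1 ≤ p) (hq : 1 ≤ q)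
    (hα1 : -1 < α) (hα2 : α < q - 1) (ℓ : ℝ) (hℓ : ℓ = 1 - (1 + α) / q) :
    ∃ N : ℝ, 0 < N ∧ ∀ f : ℝ × ℝ → ℝ,
      ContDiffOn ℝ 1 f (Set.univ ×ˢ Set.Ici 0) →
      (∫⁻ y in Set.Ioi (0 : ℝ),
          (∫⁻ x, ENNReal.ofReal (‖fderiv ℝ f (x, y)‖ ^ p)) ^ (q / p) *
            ENNReal.ofReal (y ^ α)) ≠ ⊤ →
      (∫⁻ h : ℝ,
          eLpNorm (fun x => f (x + h, 0) - f (x, 0)) (ENNReal.ofReal p) volume ^ q *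
            ENNReal.ofReal (|h| ^ (-(ℓ * q) - 1))) ^ (1 / q)
        ≤ ENNReal.ofReal N *
          (∫⁻ y in Set.Ioi (0 : ℝ),
            (∫⁻ x, ENNReal.ofReal (‖fderiv ℝ f (x, y)‖ ^ p)) ^ (q / p) *
              ENNReal.ofReal (y ^ α)) ^ (1 / q) :=
  trace_besov_dim_one_general p q α hp hq hα2 ℓ hℓ
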